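/- Let C be the quotient of ℂ[x₀,x₁,x₂,y₃,y₄,y₅] by the ideal generated by the two quadrics x₀²−3x₁²+2x₂²+3y₃²−8y₄²+5y₅² and 3x₀²−8x₁²+5x₂²+y₃²−3y₄²+2y₅², and let ω : ℂ[w₀,…,w₉] → C be the ℂ-algebra homomorphism determined by w₀ ↦ x₂², w₁ ↦ x₀x₁, w₂ ↦ x₀x₂, w₃ ↦ x₁x₂, w₄ ↦ y₃², w₅ ↦ y₄², w₆ ↦ y₅², w₇ ↦ y₃y₄, w₈ ↦ y₃y₅, w₉ ↦ y₄y₅. Then the kernel of ω is generated, as an ideal of ℂ[w₀,…,w₉], by its homogeneous elements of degree 2. -/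

import Mathlib

set_option maxHeartbeats 1000000

open MvPolynomial

/-- The ideal of ℂ[x₀,x₁,x₂,y₃,y₄,y₅] (variables `X 0,X 1,X 2` = x₀,x₁,x₂ and
`X 3,X 4,X 5` = y₃,y₄,y₅) generated by the two quadrics
x₀²−3x₁²+2x₂²+3y₃²−8y₄²+5y₅² and 3x₀²−8x₁²+5x₂²+y₃²−3y₄²+2y₅². -/
noncomputable def I9 : Ideal (MvPolynomial (Fin 6) ℂ) :=
  Ideal.span
    {X 0 ^ 2 - 3 * X 1 ^ 2 + 2 * X 2 ^ 2 + 3 * X 3 ^ 2 - 8 * X 4 ^ 2 + 5 * X 5 ^ 2,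
     3 * X 0 ^ 2 - 8 * X 1 ^ 2 + 5 * X 2 ^ 2 + X 3 ^ 2 - 3 * X 4 ^ 2 + 2 * X 5 ^ 2}

/-- The ℂ-algebra homomorphism ω : ℂ[w₀,…,w₉] → C = ℂ[x,y]/I9 determined by
w₀ ↦ x₂², w₁ ↦ x₀x₁, w₂ ↦ x₀x₂, w₃ ↦ x₁x₂, w₄ ↦ y₃², w₅ ↦ y₄², w₆ ↦ y₅²,
w₇ ↦ y₃y₄, w₈ ↦ y₃y₅, w₉ ↦ y₄y₅ (mod I9). -/
noncomputable def omega : MvPolynomial (Fin 10) ℂ →ₐ[ℂ] (MvPolynomial (Fin 6) ℂ ⧸ I9) :=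
  aeval fun i => Ideal.Quotient.mk I9
    (![X 2 ^ 2, X 0 * X 1, X 0 * X 2, X 1 * X 2, X 3 ^ 2, X 4 ^ 2, X 5 ^ 2,
       X 3 * X 4, X 3 * X 5, X 4 * X 5] i)

namespace WBS9

noncomputable section

abbrev P10 := MvPolynomial (Fin 10) ℂ
abbrev P6 := MvPolynomial (Fin 6) ℂ
abbrev R4 := MvPolynomial (Fin 4) ℂ

/-- The ten quadric monomials. -/
def mons : Fin 10 → P6 :=
  ![X 2 ^ 2, X 0 * X 1, X 0 * X 2, X 1 * X 2, X 3 ^ 2, X 4 ^ 2, X 5 ^ 2,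
    X 3 * X 4, X 3 * X 5, X 4 * X 5]

/-- ω before passing to the quotient. -/
def phi : P10 →ₐ[ℂ] P6 := aeval mons

lemma phi_X0 : phi (X 0) = X 2 ^ 2 := aeval_X _ _
lemma phi_X1 : phi (X 1) = X 0 * X 1 := aeval_X _ _
lemma phi_X2 : phi (X 2) = X 0 * X 2 := aeval_X _ _
lemma phi_X3 : phi (X 3) = X 1 * X 2 := aeval_X _ _
lemma phi_X4 : phi (X 4) = X 3 ^ 2 := aeval_X _ _
lemma phi_X5 : phi (X 5) = X 4 ^ 2 := aeval_X _ _
lemma phi_X6 : phi (X 6) = X 5 ^ 2 := aeval_X _ _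
lemma phi_X7 : phi (X 7) = X 3 * X 4 := aeval_X _ _
lemma phi_X8 : phi (X 8) = X 3 * X 5 := aeval_X _ _
lemma phi_X9 : phi (X 9) = X 4 * X 5 := aeval_X _ _

lemma omega_eq (f : P10) : omega f = Ideal.Quotient.mk I9 (phi f) := by
  have h : omega = (Ideal.Quotient.mkₐ ℂ I9).comp phi := by
    apply MvPolynomial.algHom_ext
    intro i
    fin_cases i <;> simp [omega, phi, mons]
  rw [h]; rfl

/-- linear forms giving x₀² and x₁² mod I9. -/
def l0 : P10 := X 0 + 21 * X 4 - 55 * X 5 + 34 * X 6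
def l1 : P10 := X 0 + 8 * X 4 - 21 * X 5 + 13 * X 6

def q1 : P10 := X 1 ^ 2 - l0 * l1
def q2 : P10 := X 2 ^ 2 - X 0 * l0
def q3 : P10 := X 3 ^ 2 - X 0 * l1
def q4 : P10 := X 1 * X 2 - l0 * X 3
def q5 : P10 := X 1 * X 3 - l1 * X 2
def q6 : P10 := X 2 * X 3 - X 0 * X 1
def q7 : P10 := X 7 ^ 2 - X 4 * X 5
def q8 : P10 := X 8 ^ 2 - X 4 * X 6
def q9 : P10 := X 9 ^ 2 - X 5 * X 6
def q10 : P10 := X 7 * X 8 - X 4 * X 9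
def q11 : P10 := X 7 * X 9 - X 5 * X 8
def q12 : P10 := X 8 * X 9 - X 6 * X 7

def Qset : Set P10 := {q1, q2, q3, q4, q5, q6, q7, q8, q9, q10, q11, q12}

def J : Ideal P10 := Ideal.span Qset

/-- generators of I9 (textually identical to the defining generators). -/
def r1 : P6 := X 0 ^ 2 - 3 * X 1 ^ 2 + 2 * X 2 ^ 2 + 3 * X 3 ^ 2 - 8 * X 4 ^ 2 + 5 * X 5 ^ 2
def r2 : P6 := 3 * X 0 ^ 2 - 8 * X 1 ^ 2 + 5 * X 2 ^ 2 + X 3 ^ 2 - 3 * X 4 ^ 2 + 2 * X 5 ^ 2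

lemma I9_eq : I9 = Ideal.span {r1, r2} := rfl

lemma mem_I9_iff (g : P6) : g ∈ I9 ↔ ∃ a b : P6, a * r1 + b * r2 = g := by
  rw [I9_eq, Ideal.mem_span_pair]

lemma phiQ_mem : ∀ q ∈ Qset, phi q ∈ I9 := by
  have key : ∀ q : P10, ∀ a b : P6, a * r1 + b * r2 = phi q → phi q ∈ I9 :=
    fun q a b h => (mem_I9_iff _).mpr ⟨a, b, h⟩
  intro q hq
  simp only [Qset, Set.mem_insert_iff, Set.mem_singleton_iff] at hq
  rcases hq with rfl | rfl | rfl | rfl | rfl | rfl | rfl | rfl | rfl | rfl | rfl | rfl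
  · exact key _ ((-8) * X 1 ^ 2 + (-3) * (X 2 ^ 2 + 21 * X 3 ^ 2 - 55 * X 4 ^ 2 + 34 * X 5 ^ 2))
      (3 * X 1 ^ 2 + (X 2 ^ 2 + 21 * X 3 ^ 2 - 55 * X 4 ^ 2 + 34 * X 5 ^ 2)) (by
      simp only [q1, l0, l1, r1, r2, map_add, map_sub, map_mul, map_pow, map_ofNat,
        phi_X0, phi_X1, phi_X2, phi_X3, phi_X4, phi_X5, phi_X6, phi_X7, phi_X8, phi_X9]
      ring)
  · exact key _ ((-8) * X 2 ^ 2) (3 * X 2 ^ 2) (by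
      simp only [q2, l0, l1, r1, r2, map_add, map_sub, map_mul, map_pow, map_ofNat,
        phi_X0, phi_X1, phi_X2, phi_X3, phi_X4, phi_X5, phi_X6, phi_X7, phi_X8, phi_X9]
      ring)
  · exact key _ ((-3) * X 2 ^ 2) (X 2 ^ 2) (by
      simp only [q3, l0, l1, r1, r2, map_add, map_sub, map_mul, map_pow, map_ofNat,
        phi_X0, phi_X1, phi_X2, phi_X3, phi_X4, phi_X5, phi_X6, phi_X7, phi_X8, phi_X9]
      ring)
  · exact key _ ((-8) * (X 1 * X 2)) (3 * (X 1 * X 2)) (by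
      simp only [q4, l0, l1, r1, r2, map_add, map_sub, map_mul, map_pow, map_ofNat,
        phi_X0, phi_X1, phi_X2, phi_X3, phi_X4, phi_X5, phi_X6, phi_X7, phi_X8, phi_X9]
      ring)
  · exact key _ ((-3) * (X 0 * X 2)) (X 0 * X 2) (by
      simp only [q5, l0, l1, r1, r2, map_add, map_sub, map_mul, map_pow, map_ofNat,
        phi_X0, phi_X1, phi_X2, phi_X3, phi_X4, phi_X5, phi_X6, phi_X7, phi_X8, phi_X9]
      ring)
  · exact key _ 0 0 (by
      simp only [q6, l0, l1, r1, r2, map_add, map_sub, map_mul, map_pow, map_ofNat,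
        phi_X0, phi_X1, phi_X2, phi_X3, phi_X4, phi_X5, phi_X6, phi_X7, phi_X8, phi_X9]
      ring)
  · exact key _ 0 0 (by
      simp only [q7, l0, l1, r1, r2, map_add, map_sub, map_mul, map_pow, map_ofNat,
        phi_X0, phi_X1, phi_X2, phi_X3, phi_X4, phi_X5, phi_X6, phi_X7, phi_X8, phi_X9]
      ring)
  · exact key _ 0 0 (by
      simp only [q8, l0, l1, r1, r2, map_add, map_sub, map_mul, map_pow, map_ofNat,
        phi_X0, phi_X1, phi_X2, phi_X3, phi_X4, phi_X5, phi_X6, phi_X7, phi_X8, phi_X9]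
      ring)
  · exact key _ 0 0 (by
      simp only [q9, l0, l1, r1, r2, map_add, map_sub, map_mul, map_pow, map_ofNat,
        phi_X0, phi_X1, phi_X2, phi_X3, phi_X4, phi_X5, phi_X6, phi_X7, phi_X8, phi_X9]
      ring)
  · exact key _ 0 0 (by
      simp only [q10, l0, l1, r1, r2, map_add, map_sub, map_mul, map_pow, map_ofNat,
        phi_X0, phi_X1, phi_X2, phi_X3, phi_X4, phi_X5, phi_X6, phi_X7, phi_X8, phi_X9]
      ring)
  · exact key _ 0 0 (by
      simp only [q11, l0, l1, r1, r2, map_add, map_sub, map_mul, map_pow, map_ofNat,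
        phi_X0, phi_X1, phi_X2, phi_X3, phi_X4, phi_X5, phi_X6, phi_X7, phi_X8, phi_X9]
      ring)
  · exact key _ 0 0 (by
      simp only [q12, l0, l1, r1, r2, map_add, map_sub, map_mul, map_pow, map_ofNat,
        phi_X0, phi_X1, phi_X2, phi_X3, phi_X4, phi_X5, phi_X6, phi_X7, phi_X8, phi_X9]
      ring)

lemma Q_mem_ker : ∀ q ∈ Qset, q ∈ RingHom.ker omega := by
  intro q hq
  rw [RingHom.mem_ker]
  show omega q = 0
  rw [omega_eq, Ideal.Quotient.eq_zero_iff_mem]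
  exact phiQ_mem q hq

section Homog

lemma hX1 (i : Fin 10) : (X i : P10).IsHomogeneous 1 := isHomogeneous_X ℂ i

lemma hnum (n : ℕ) [n.AtLeastTwo] : (OfNat.ofNat n : P10).IsHomogeneous 0 := by
  have h := isHomogeneous_C (Fin 10) (OfNat.ofNat n : ℂ)
  rwa [map_ofNat] at h

lemma hnummul (n : ℕ) [n.AtLeastTwo] (i : Fin 10) :
    ((OfNat.ofNat n : P10) * X i).IsHomogeneous 1 := by
  simpa using (hnum n).mul (hX1 i)

lemma hl0 : l0.IsHomogeneous 1 := by
  rw [l0]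
  exact (((hX1 0).add (hnummul 21 4)).sub (hnummul 55 5)).add (hnummul 34 6)

lemma hl1 : l1.IsHomogeneous 1 := by
  rw [l1]
  exact (((hX1 0).add (hnummul 8 4)).sub (hnummul 21 5)).add (hnummul 13 6)

lemma hXX (i j : Fin 10) : (X i * X j : P10).IsHomogeneous 2 := (hX1 i).mul (hX1 j)

lemma hXsq (i : Fin 10) : (X i ^ 2 : P10).IsHomogeneous 2 := by
  rw [pow_two]; exact hXX i i

lemma Q_homog : ∀ q ∈ Qset, q.IsHomogeneous 2 := by
  intro q hq
  simp only [Qset, Set.mem_insert_iff, Set.mem_singleton_iff] at hq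
  rcases hq with rfl | rfl | rfl | rfl | rfl | rfl | rfl | rfl | rfl | rfl | rfl | rfl
  · exact (hXsq 1).sub (hl0.mul hl1)
  · exact (hXsq 2).sub ((hX1 0).mul hl0)
  · exact (hXsq 3).sub ((hX1 0).mul hl1)
  · exact (hXX 1 2).sub (hl0.mul (hX1 3))
  · exact (hXX 1 3).sub (hl1.mul (hX1 2))
  · exact (hXX 2 3).sub (hXX 0 1)
  · exact (hXsq 7).sub (hXX 4 5)
  · exact (hXsq 8).sub (hXX 4 6)
  · exact (hXsq 9).sub (hXX 5 6)
  · exact (hXX 7 8).sub (hXX 4 9)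
  · exact (hXX 7 9).sub (hXX 5 8)
  · exact (hXX 8 9).sub (hXX 6 7)

end Homog

/-! ### Normal monomials and reduction modulo J -/

abbrev Idx := ℕ × ℕ × ℕ × ℕ × Fin 4 × Fin 4

def En : Fin 4 → P10 := ![1, X 7, X 8, X 9]
def Dn : Fin 4 → P10 := ![1, X 1, X 2, X 3]

def nm : Idx → P10
  | (a, b, c, d, e, f) => X 0 ^ a * X 4 ^ b * X 5 ^ c * X 6 ^ d * En e * Dn f

def V : Submodule ℂ P10 := Submodule.span ℂ (Set.range nm)

lemma nm_mem (p : Idx) : nm p ∈ V := Submodule.subset_span ⟨p, rfl⟩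

lemma mul_stable (g : P10) (h : ∀ p, g * nm p ∈ V) : ∀ v ∈ V, g * v ∈ V := by
  intro v hv
  induction hv using Submodule.span_induction with
  | mem x hx => obtain ⟨p, rfl⟩ := hx; exact h p
  | zero => rw [mul_zero]; exact V.zero_mem
  | add x y _ _ hx hy => rw [mul_add]; exact V.add_mem hx hy
  | smul c x _ hx => rw [mul_smul_comm]; exact V.smul_mem c hx

lemma l0_mul_nm (p : Idx) : l0 * nm p ∈ V := by
  obtain ⟨a, b, c, d, e, f⟩ := p
  have : l0 * nm (a, b, c, d, e, f) =
      nm (a+1, b, c, d, e, f) + (21:ℂ) • nm (a, b+1, c, d, e, f)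
        - (55:ℂ) • nm (a, b, c+1, d, e, f) + (34:ℂ) • nm (a, b, c, d+1, e, f) := by
    simp only [nm, l0, smul_eq_C_mul, map_ofNat]
    ring
  rw [this]
  exact V.add_mem (V.sub_mem (V.add_mem (nm_mem _) (V.smul_mem _ (nm_mem _)))
    (V.smul_mem _ (nm_mem _))) (V.smul_mem _ (nm_mem _))

lemma l1_mul_nm (p : Idx) : l1 * nm p ∈ V := by
  obtain ⟨a, b, c, d, e, f⟩ := p
  have : l1 * nm (a, b, c, d, e, f) =
      nm (a+1, b, c, d, e, f) + (8:ℂ) • nm (a, b+1, c, d, e, f)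
        - (21:ℂ) • nm (a, b, c+1, d, e, f) + (13:ℂ) • nm (a, b, c, d+1, e, f) := by
    simp only [nm, l1, smul_eq_C_mul, map_ofNat]
    ring
  rw [this]
  exact V.add_mem (V.sub_mem (V.add_mem (nm_mem _) (V.smul_mem _ (nm_mem _)))
    (V.smul_mem _ (nm_mem _))) (V.smul_mem _ (nm_mem _))

lemma l0_mul_mem : ∀ v ∈ V, l0 * v ∈ V := mul_stable l0 l0_mul_nm
lemma l1_mul_mem : ∀ v ∈ V, l1 * v ∈ V := mul_stable l1 l1_mul_nm

lemma mulq_mem_J (m q : P10) (hq : q ∈ Qset) : m * q ∈ J :=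
  Ideal.mul_mem_left _ m (Ideal.subset_span hq)

lemma step (i : Fin 10) (p : Idx) : ∃ v ∈ V, X i * nm p - v ∈ J := by
  obtain ⟨a, b, c, d, e, f⟩ := p
  have hq1 : q1 ∈ Qset := by simp [Qset]
  have hq2 : q2 ∈ Qset := by simp [Qset]
  have hq3 : q3 ∈ Qset := by simp [Qset]
  have hq4 : q4 ∈ Qset := by simp [Qset]
  have hq5 : q5 ∈ Qset := by simp [Qset]
  have hq6 : q6 ∈ Qset := by simp [Qset]
  have hq7 : q7 ∈ Qset := by simp [Qset]
  have hq8 : q8 ∈ Qset := by simp [Qset]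
  have hq9 : q9 ∈ Qset := by simp [Qset]
  have hq10 : q10 ∈ Qset := by simp [Qset]
  have hq11 : q11 ∈ Qset := by simp [Qset]
  have hq12 : q12 ∈ Qset := by simp [Qset]
  fin_cases i
  · show ∃ v ∈ V, X 0 * nm (a, b, c, d, e, f) - v ∈ J
    refine ⟨nm (a+1, b, c, d, e, f), nm_mem _, ?_⟩
    rw [show X 0 * nm (a, b, c, d, e, f) - nm (a+1, b, c, d, e, f) = 0 by simp [nm, En, Dn]; ring]
    exact J.zero_mem
  · show ∃ v ∈ V, X 1 * nm (a, b, c, d, e, f) - v ∈ J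
    fin_cases f
    · show ∃ v ∈ V, X 1 * nm (a, b, c, d, e, 0) - v ∈ J
      refine ⟨nm (a, b, c, d, e, 1), nm_mem _, ?_⟩
      rw [show X 1 * nm (a, b, c, d, e, 0) - nm (a, b, c, d, e, 1) = 0 by simp [nm, En, Dn]; ring]
      exact J.zero_mem
    · show ∃ v ∈ V, X 1 * nm (a, b, c, d, e, 1) - v ∈ J
      refine ⟨l0 * (l1 * nm (a, b, c, d, e, 0)), l0_mul_mem _ (l1_mul_nm _), ?_⟩
      rw [show X 1 * nm (a, b, c, d, e, 1) - l0 * (l1 * nm (a, b, c, d, e, 0)) = (X 0 ^ a * X 4 ^ b * X 5 ^ c * X 6 ^ d * En e) * q1 by simp [nm, En, Dn, q1, l0, l1]; ring]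
      exact mulq_mem_J _ _ hq1
    · show ∃ v ∈ V, X 1 * nm (a, b, c, d, e, 2) - v ∈ J
      refine ⟨l0 * nm (a, b, c, d, e, 3), l0_mul_nm _, ?_⟩
      rw [show X 1 * nm (a, b, c, d, e, 2) - l0 * nm (a, b, c, d, e, 3) = (X 0 ^ a * X 4 ^ b * X 5 ^ c * X 6 ^ d * En e) * q4 by simp [nm, En, Dn, q4, l0, l1]; ring]
      exact mulq_mem_J _ _ hq4
    · show ∃ v ∈ V, X 1 * nm (a, b, c, d, e, 3) - v ∈ J
      refine ⟨l1 * nm (a, b, c, d, e, 2), l1_mul_nm _, ?_⟩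
      rw [show X 1 * nm (a, b, c, d, e, 3) - l1 * nm (a, b, c, d, e, 2) = (X 0 ^ a * X 4 ^ b * X 5 ^ c * X 6 ^ d * En e) * q5 by simp [nm, En, Dn, q5, l0, l1]; ring]
      exact mulq_mem_J _ _ hq5
  · show ∃ v ∈ V, X 2 * nm (a, b, c, d, e, f) - v ∈ J
    fin_cases f
    · show ∃ v ∈ V, X 2 * nm (a, b, c, d, e, 0) - v ∈ J
      refine ⟨nm (a, b, c, d, e, 2), nm_mem _, ?_⟩
      rw [show X 2 * nm (a, b, c, d, e, 0) - nm (a, b, c, d, e, 2) = 0 by simp [nm, En, Dn]; ring]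
      exact J.zero_mem
    · show ∃ v ∈ V, X 2 * nm (a, b, c, d, e, 1) - v ∈ J
      refine ⟨l0 * nm (a, b, c, d, e, 3), l0_mul_nm _, ?_⟩
      rw [show X 2 * nm (a, b, c, d, e, 1) - l0 * nm (a, b, c, d, e, 3) = (X 0 ^ a * X 4 ^ b * X 5 ^ c * X 6 ^ d * En e) * q4 by simp [nm, En, Dn, q4, l0, l1]; ring]
      exact mulq_mem_J _ _ hq4
    · show ∃ v ∈ V, X 2 * nm (a, b, c, d, e, 2) - v ∈ J
      refine ⟨l0 * nm (a+1, b, c, d, e, 0), l0_mul_nm _, ?_⟩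
      rw [show X 2 * nm (a, b, c, d, e, 2) - l0 * nm (a+1, b, c, d, e, 0) = (X 0 ^ a * X 4 ^ b * X 5 ^ c * X 6 ^ d * En e) * q2 by simp [nm, En, Dn, q2, l0, l1]; ring]
      exact mulq_mem_J _ _ hq2
    · show ∃ v ∈ V, X 2 * nm (a, b, c, d, e, 3) - v ∈ J
      refine ⟨nm (a+1, b, c, d, e, 1), nm_mem _, ?_⟩
      rw [show X 2 * nm (a, b, c, d, e, 3) - nm (a+1, b, c, d, e, 1) = (X 0 ^ a * X 4 ^ b * X 5 ^ c * X 6 ^ d * En e) * q6 by simp [nm, En, Dn, q6, l0, l1]; ring]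
      exact mulq_mem_J _ _ hq6
  · show ∃ v ∈ V, X 3 * nm (a, b, c, d, e, f) - v ∈ J
    fin_cases f
    · show ∃ v ∈ V, X 3 * nm (a, b, c, d, e, 0) - v ∈ J
      refine ⟨nm (a, b, c, d, e, 3), nm_mem _, ?_⟩
      rw [show X 3 * nm (a, b, c, d, e, 0) - nm (a, b, c, d, e, 3) = 0 by simp [nm, En, Dn]; ring]
      exact J.zero_mem
    · show ∃ v ∈ V, X 3 * nm (a, b, c, d, e, 1) - v ∈ J
      refine ⟨l1 * nm (a, b, c, d, e, 2), l1_mul_nm _, ?_⟩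
      rw [show X 3 * nm (a, b, c, d, e, 1) - l1 * nm (a, b, c, d, e, 2) = (X 0 ^ a * X 4 ^ b * X 5 ^ c * X 6 ^ d * En e) * q5 by simp [nm, En, Dn, q5, l0, l1]; ring]
      exact mulq_mem_J _ _ hq5
    · show ∃ v ∈ V, X 3 * nm (a, b, c, d, e, 2) - v ∈ J
      refine ⟨nm (a+1, b, c, d, e, 1), nm_mem _, ?_⟩
      rw [show X 3 * nm (a, b, c, d, e, 2) - nm (a+1, b, c, d, e, 1) = (X 0 ^ a * X 4 ^ b * X 5 ^ c * X 6 ^ d * En e) * q6 by simp [nm, En, Dn, q6, l0, l1]; ring]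
      exact mulq_mem_J _ _ hq6
    · show ∃ v ∈ V, X 3 * nm (a, b, c, d, e, 3) - v ∈ J
      refine ⟨l1 * nm (a+1, b, c, d, e, 0), l1_mul_nm _, ?_⟩
      rw [show X 3 * nm (a, b, c, d, e, 3) - l1 * nm (a+1, b, c, d, e, 0) = (X 0 ^ a * X 4 ^ b * X 5 ^ c * X 6 ^ d * En e) * q3 by simp [nm, En, Dn, q3, l0, l1]; ring]
      exact mulq_mem_J _ _ hq3
  · show ∃ v ∈ V, X 4 * nm (a, b, c, d, e, f) - v ∈ J
    refine ⟨nm (a, b+1, c, d, e, f), nm_mem _, ?_⟩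
    rw [show X 4 * nm (a, b, c, d, e, f) - nm (a, b+1, c, d, e, f) = 0 by simp [nm, En, Dn]; ring]
    exact J.zero_mem
  · show ∃ v ∈ V, X 5 * nm (a, b, c, d, e, f) - v ∈ J
    refine ⟨nm (a, b, c+1, d, e, f), nm_mem _, ?_⟩
    rw [show X 5 * nm (a, b, c, d, e, f) - nm (a, b, c+1, d, e, f) = 0 by simp [nm, En, Dn]; ring]
    exact J.zero_mem
  · show ∃ v ∈ V, X 6 * nm (a, b, c, d, e, f) - v ∈ J
    refine ⟨nm (a, b, c, d+1, e, f), nm_mem _, ?_⟩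
    rw [show X 6 * nm (a, b, c, d, e, f) - nm (a, b, c, d+1, e, f) = 0 by simp [nm, En, Dn]; ring]
    exact J.zero_mem
  · show ∃ v ∈ V, X 7 * nm (a, b, c, d, e, f) - v ∈ J
    fin_cases e
    · show ∃ v ∈ V, X 7 * nm (a, b, c, d, 0, f) - v ∈ J
      refine ⟨nm (a, b, c, d, 1, f), nm_mem _, ?_⟩
      rw [show X 7 * nm (a, b, c, d, 0, f) - nm (a, b, c, d, 1, f) = 0 by simp [nm, En, Dn]; ring]
      exact J.zero_mem
    · show ∃ v ∈ V, X 7 * nm (a, b, c, d, 1, f) - v ∈ J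
      refine ⟨nm (a, b+1, c+1, d, 0, f), nm_mem _, ?_⟩
      rw [show X 7 * nm (a, b, c, d, 1, f) - nm (a, b+1, c+1, d, 0, f) = (X 0 ^ a * X 4 ^ b * X 5 ^ c * X 6 ^ d * Dn f) * q7 by simp [nm, En, Dn, q7, l0, l1]; ring]
      exact mulq_mem_J _ _ hq7
    · show ∃ v ∈ V, X 7 * nm (a, b, c, d, 2, f) - v ∈ J
      refine ⟨nm (a, b+1, c, d, 3, f), nm_mem _, ?_⟩
      rw [show X 7 * nm (a, b, c, d, 2, f) - nm (a, b+1, c, d, 3, f) = (X 0 ^ a * X 4 ^ b * X 5 ^ c * X 6 ^ d * Dn f) * q10 by simp [nm, En, Dn, q10, l0, l1]; ring]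
      exact mulq_mem_J _ _ hq10
    · show ∃ v ∈ V, X 7 * nm (a, b, c, d, 3, f) - v ∈ J
      refine ⟨nm (a, b, c+1, d, 2, f), nm_mem _, ?_⟩
      rw [show X 7 * nm (a, b, c, d, 3, f) - nm (a, b, c+1, d, 2, f) = (X 0 ^ a * X 4 ^ b * X 5 ^ c * X 6 ^ d * Dn f) * q11 by simp [nm, En, Dn, q11, l0, l1]; ring]
      exact mulq_mem_J _ _ hq11
  · show ∃ v ∈ V, X 8 * nm (a, b, c, d, e, f) - v ∈ J
    fin_cases e
    · show ∃ v ∈ V, X 8 * nm (a, b, c, d, 0, f) - v ∈ J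
      refine ⟨nm (a, b, c, d, 2, f), nm_mem _, ?_⟩
      rw [show X 8 * nm (a, b, c, d, 0, f) - nm (a, b, c, d, 2, f) = 0 by simp [nm, En, Dn]; ring]
      exact J.zero_mem
    · show ∃ v ∈ V, X 8 * nm (a, b, c, d, 1, f) - v ∈ J
      refine ⟨nm (a, b+1, c, d, 3, f), nm_mem _, ?_⟩
      rw [show X 8 * nm (a, b, c, d, 1, f) - nm (a, b+1, c, d, 3, f) = (X 0 ^ a * X 4 ^ b * X 5 ^ c * X 6 ^ d * Dn f) * q10 by simp [nm, En, Dn, q10, l0, l1]; ring]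
      exact mulq_mem_J _ _ hq10
    · show ∃ v ∈ V, X 8 * nm (a, b, c, d, 2, f) - v ∈ J
      refine ⟨nm (a, b+1, c, d+1, 0, f), nm_mem _, ?_⟩
      rw [show X 8 * nm (a, b, c, d, 2, f) - nm (a, b+1, c, d+1, 0, f) = (X 0 ^ a * X 4 ^ b * X 5 ^ c * X 6 ^ d * Dn f) * q8 by simp [nm, En, Dn, q8, l0, l1]; ring]
      exact mulq_mem_J _ _ hq8
    · show ∃ v ∈ V, X 8 * nm (a, b, c, d, 3, f) - v ∈ J
      refine ⟨nm (a, b, c, d+1, 1, f), nm_mem _, ?_⟩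
      rw [show X 8 * nm (a, b, c, d, 3, f) - nm (a, b, c, d+1, 1, f) = (X 0 ^ a * X 4 ^ b * X 5 ^ c * X 6 ^ d * Dn f) * q12 by simp [nm, En, Dn, q12, l0, l1]; ring]
      exact mulq_mem_J _ _ hq12
  · show ∃ v ∈ V, X 9 * nm (a, b, c, d, e, f) - v ∈ J
    fin_cases e
    · show ∃ v ∈ V, X 9 * nm (a, b, c, d, 0, f) - v ∈ J
      refine ⟨nm (a, b, c, d, 3, f), nm_mem _, ?_⟩
      rw [show X 9 * nm (a, b, c, d, 0, f) - nm (a, b, c, d, 3, f) = 0 by simp [nm, En, Dn]; ring]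
      exact J.zero_mem
    · show ∃ v ∈ V, X 9 * nm (a, b, c, d, 1, f) - v ∈ J
      refine ⟨nm (a, b, c+1, d, 2, f), nm_mem _, ?_⟩
      rw [show X 9 * nm (a, b, c, d, 1, f) - nm (a, b, c+1, d, 2, f) = (X 0 ^ a * X 4 ^ b * X 5 ^ c * X 6 ^ d * Dn f) * q11 by simp [nm, En, Dn, q11, l0, l1]; ring]
      exact mulq_mem_J _ _ hq11
    · show ∃ v ∈ V, X 9 * nm (a, b, c, d, 2, f) - v ∈ J
      refine ⟨nm (a, b, c, d+1, 1, f), nm_mem _, ?_⟩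
      rw [show X 9 * nm (a, b, c, d, 2, f) - nm (a, b, c, d+1, 1, f) = (X 0 ^ a * X 4 ^ b * X 5 ^ c * X 6 ^ d * Dn f) * q12 by simp [nm, En, Dn, q12, l0, l1]; ring]
      exact mulq_mem_J _ _ hq12
    · show ∃ v ∈ V, X 9 * nm (a, b, c, d, 3, f) - v ∈ J
      refine ⟨nm (a, b, c+1, d+1, 0, f), nm_mem _, ?_⟩
      rw [show X 9 * nm (a, b, c, d, 3, f) - nm (a, b, c+1, d+1, 0, f) = (X 0 ^ a * X 4 ^ b * X 5 ^ c * X 6 ^ d * Dn f) * q9 by simp [nm, En, Dn, q9, l0, l1]; ring]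
      exact mulq_mem_J _ _ hq9

lemma stepV (i : Fin 10) : ∀ v ∈ V, ∃ v' ∈ V, X i * v - v' ∈ J := by
  intro v hv
  induction hv using Submodule.span_induction with
  | mem x hx =>
    obtain ⟨p, rfl⟩ := hx
    exact step i p
  | zero => exact ⟨0, V.zero_mem, by simp⟩
  | add x y _ _ hx hy =>
    obtain ⟨v1, hv1, hj1⟩ := hx
    obtain ⟨v2, hv2, hj2⟩ := hy
    refine ⟨v1 + v2, V.add_mem hv1 hv2, ?_⟩
    rw [show X i * (x + y) - (v1 + v2) = (X i * x - v1) + (X i * y - v2) by ring]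
    exact J.add_mem hj1 hj2
  | smul c x _ hx =>
    obtain ⟨v1, hv1, hj1⟩ := hx
    refine ⟨c • v1, V.smul_mem c hv1, ?_⟩
    rw [show X i * (c • x) - c • v1 = c • (X i * x - v1) by
      rw [smul_sub, mul_smul_comm]]
    rw [smul_eq_C_mul]
    exact Ideal.mul_mem_left _ _ hj1

lemma reduce (f : P10) : ∃ v ∈ V, f - v ∈ J := by
  induction f using MvPolynomial.induction_on with
  | C a =>
    refine ⟨C a, ?_, by simp⟩
    have h1 : nm (0, 0, 0, 0, 0, 0) = 1 := by simp [nm, En, Dn]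
    have : (C a : P10) = a • nm (0, 0, 0, 0, 0, 0) := by
      rw [h1, smul_eq_C_mul, mul_one]
    rw [this]
    exact V.smul_mem a (nm_mem _)
  | add p q hp hq =>
    obtain ⟨vp, hvp, hjp⟩ := hp
    obtain ⟨vq, hvq, hjq⟩ := hq
    refine ⟨vp + vq, V.add_mem hvp hvq, ?_⟩
    rw [show p + q - (vp + vq) = (p - vp) + (q - vq) by ring]
    exact J.add_mem hjp hjq
  | mul_X p i hp =>
    obtain ⟨v, hv, hj⟩ := hp
    obtain ⟨v', hv', hj'⟩ := stepV i v hv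
    refine ⟨v', hv', ?_⟩
    rw [show p * X i - v' = X i * (p - v) + (X i * v - v') by ring]
    exact J.add_mem (Ideal.mul_mem_left _ _ hj) hj'

def L0' : R4 := X 0^2 + 21 * X 1^2 - 55 * X 2^2 + 34 * X 3^2
def L1' : R4 := X 0^2 + 8 * X 1^2 - 21 * X 2^2 + 13 * X 3^2
def p0 : Polynomial R4 := Polynomial.X ^ 2 - Polynomial.C L0'
abbrev B1 := AdjoinRoot p0
lemma hp0 : p0.Monic := Polynomial.monic_X_pow_sub_C _ (by norm_num)
lemma hd0 : p0.natDegree = 2 := Polynomial.natDegree_X_pow_sub_C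
instance : Nontrivial B1 := by
  have b := AdjoinRoot.powerBasisAux' hp0
  exact nontrivial_of_ne (b ⟨0, by rw [hd0]; norm_num⟩) 0 (b.ne_zero _)
def p1 : Polynomial B1 := Polynomial.X ^ 2 - Polynomial.C (algebraMap R4 B1 L1')
abbrev B2 := AdjoinRoot p1
lemma hp1 : p1.Monic := Polynomial.monic_X_pow_sub_C _ (by norm_num)
lemma hd1 : p1.natDegree = 2 := Polynomial.natDegree_X_pow_sub_C

def b0 : Module.Basis (Fin 2) R4 B1 := (AdjoinRoot.powerBasis' hp0).basis.reindex (finCongr hd0)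
def b1 : Module.Basis (Fin 2) B1 B2 := (AdjoinRoot.powerBasis' hp1).basis.reindex (finCongr hd1)
def bb : Module.Basis (Fin 2 × Fin 2) R4 B2 := b0.smulTower b1
def BB : Module.Basis ((Fin 4 →₀ ℕ) × (Fin 2 × Fin 2)) ℂ B2 := (basisMonomials (Fin 4) ℂ).smulTower bb

lemma b0_apply (i : Fin 2) : b0 i = AdjoinRoot.root p0 ^ (i : ℕ) := by
  rw [b0, Module.Basis.reindex_apply, PowerBasis.basis_eq_pow]; simp [AdjoinRoot.powerBasis']; rfl
lemma b1_apply (i : Fin 2) : b1 i = AdjoinRoot.root p1 ^ (i : ℕ) := by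
  rw [b1, Module.Basis.reindex_apply, PowerBasis.basis_eq_pow]; simp [AdjoinRoot.powerBasis']; rfl

lemma root0_sq : AdjoinRoot.root p0 ^ 2 = algebraMap R4 B1 L0' := by
  have h : AdjoinRoot.mk p0 (Polynomial.X ^ 2 - Polynomial.C L0') = 0 := AdjoinRoot.mk_self
  simp only [map_sub, map_pow, AdjoinRoot.mk_X, AdjoinRoot.mk_C, sub_eq_zero] at h
  rw [h, AdjoinRoot.algebraMap_eq]
lemma root1_sq : AdjoinRoot.root p1 ^ 2 = algebraMap R4 B2 L1' := by
  have h : AdjoinRoot.mk p1 (Polynomial.X ^ 2 - Polynomial.C (algebraMap R4 B1 L1')) = 0 :=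
    AdjoinRoot.mk_self
  simp only [map_sub, map_pow, AdjoinRoot.mk_X, AdjoinRoot.mk_C, sub_eq_zero] at h
  rw [h, IsScalarTower.algebraMap_apply R4 B1 B2, AdjoinRoot.algebraMap_eq,
    AdjoinRoot.algebraMap_eq]

def a0 : B2 := algebraMap B1 B2 (AdjoinRoot.root p0)
def a1 : B2 := AdjoinRoot.root p1
def zb : Fin 4 → B2 := fun i => algebraMap R4 B2 (X i)

lemma a0_sq : a0 ^ 2 = algebraMap R4 B2 L0' := by
  rw [a0, ← map_pow, root0_sq, ← IsScalarTower.algebraMap_apply]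
lemma a1_sq : a1 ^ 2 = algebraMap R4 B2 L1' := root1_sq

lemma aL0 : algebraMap R4 B2 L0' = zb 0^2 + 21 * zb 1^2 - 55 * zb 2^2 + 34 * zb 3^2 := by
  simp only [L0', map_add, map_sub, map_mul, map_pow, map_ofNat, zb]
lemma aL1 : algebraMap R4 B2 L1' = zb 0^2 + 8 * zb 1^2 - 21 * zb 2^2 + 13 * zb 3^2 := by
  simp only [L1', map_add, map_sub, map_mul, map_pow, map_ofNat, zb]

def Phi : P6 →ₐ[ℂ] B2 := aeval ![a0, a1, zb 0, zb 1, zb 2, zb 3]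

lemma Phi_X0 : Phi (X 0) = a0 := by rw [Phi, aeval_X]; rfl
lemma Phi_X1' : True := trivial
lemma Phi_X1 : Phi (X 1) = a1 := by rw [Phi, aeval_X]; rfl
lemma Phi_X2 : Phi (X 2) = zb 0 := by rw [Phi, aeval_X]; rfl
lemma Phi_X3 : Phi (X 3) = zb 1 := by rw [Phi, aeval_X]; rfl
lemma Phi_X4 : Phi (X 4) = zb 2 := by rw [Phi, aeval_X]; rfl
lemma Phi_X5 : Phi (X 5) = zb 3 := by rw [Phi, aeval_X]; rfl

lemma BB_apply (M : Fin 4 →₀ ℕ) (i j : Fin 2) :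
    BB (M, (i, j)) = algebraMap R4 B2 (monomial M 1) * (a0 ^ (i:ℕ) * a1 ^ (j:ℕ)) := by
  rw [BB, Module.Basis.smulTower_apply]
  rw [show (MvPolynomial.basisMonomials (Fin 4) ℂ) M = MvPolynomial.monomial M 1 from by
    rw [MvPolynomial.coe_basisMonomials]]
  rw [bb, Module.Basis.smulTower_apply, b0_apply, b1_apply]
  rw [Algebra.smul_def, Algebra.smul_def, map_pow]
  simp [a0, a1, mul_assoc]

lemma mon_map (m0 m1 m2 m3 : ℕ) :
    algebraMap R4 B2 (MvPolynomial.monomial (Finsupp.single 0 m0 + Finsupp.single 1 m1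
      + Finsupp.single 2 m2 + Finsupp.single 3 m3) (1:ℂ))
    = zb 0 ^ m0 * zb 1 ^ m1 * zb 2 ^ m2 * zb 3 ^ m3 := by
  rw [show MvPolynomial.monomial (Finsupp.single 0 m0 + Finsupp.single 1 m1
      + Finsupp.single 2 m2 + Finsupp.single 3 m3) (1:ℂ)
      = (X 0 ^ m0 * X 1 ^ m1 * X 2 ^ m2 * X 3 ^ m3 : R4) from by
    simp [X_pow_eq_monomial, monomial_mul]]
  simp only [map_mul, map_pow, zb]

def xf : Fin 4 → ℕ := ![0, 0, 1, 1]
def ue1 : Fin 4 → ℕ := ![0, 1, 1, 0]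
def ue2 : Fin 4 → ℕ := ![0, 1, 0, 1]
def ue3 : Fin 4 → ℕ := ![0, 0, 1, 1]
def ijf : Fin 4 → Fin 2 × Fin 2 := ![(0, 0), (1, 1), (1, 0), (0, 1)]

def idx : Idx → (Fin 4 →₀ ℕ) × (Fin 2 × Fin 2)
  | (a, b, c, d, e, f) =>
    (Finsupp.single 0 (2*a + xf f) + Finsupp.single 1 (2*b + ue1 e)
      + Finsupp.single 2 (2*c + ue2 e) + Finsupp.single 3 (2*d + ue3 e), ijf f)

lemma key00 (a b c d : ℕ) :
    Phi (phi (nm (a, b, c, d, 0, 0))) = BB (idx (a, b, c, d, 0, 0)) := by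
  have h : idx (a, b, c, d, 0, 0) =
      (Finsupp.single 0 (2*a + 0) + Finsupp.single 1 (2*b + 0)
        + Finsupp.single 2 (2*c + 0) + Finsupp.single 3 (2*d + 0),
        ((0 : Fin 2), (0 : Fin 2))) := rfl
  rw [h, BB_apply, mon_map]
  simp [nm, En, Dn, phi_X0, phi_X1, phi_X2, phi_X3, phi_X4, phi_X5, phi_X6, phi_X7,
    phi_X8, phi_X9, Phi_X0, Phi_X1, Phi_X2, Phi_X3, Phi_X4, Phi_X5, Fin.val_zero, Fin.val_one]
  ring

lemma key01 (a b c d : ℕ) :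
    Phi (phi (nm (a, b, c, d, 0, 1))) = BB (idx (a, b, c, d, 0, 1)) := by
  have h : idx (a, b, c, d, 0, 1) =
      (Finsupp.single 0 (2*a + 0) + Finsupp.single 1 (2*b + 0)
        + Finsupp.single 2 (2*c + 0) + Finsupp.single 3 (2*d + 0),
        ((1 : Fin 2), (1 : Fin 2))) := rfl
  rw [h, BB_apply, mon_map]
  simp [nm, En, Dn, phi_X0, phi_X1, phi_X2, phi_X3, phi_X4, phi_X5, phi_X6, phi_X7,
    phi_X8, phi_X9, Phi_X0, Phi_X1, Phi_X2, Phi_X3, Phi_X4, Phi_X5, Fin.val_zero, Fin.val_one]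
  ring

lemma key02 (a b c d : ℕ) :
    Phi (phi (nm (a, b, c, d, 0, 2))) = BB (idx (a, b, c, d, 0, 2)) := by
  have h : idx (a, b, c, d, 0, 2) =
      (Finsupp.single 0 (2*a + 1) + Finsupp.single 1 (2*b + 0)
        + Finsupp.single 2 (2*c + 0) + Finsupp.single 3 (2*d + 0),
        ((1 : Fin 2), (0 : Fin 2))) := rfl
  rw [h, BB_apply, mon_map]
  simp [nm, En, Dn, phi_X0, phi_X1, phi_X2, phi_X3, phi_X4, phi_X5, phi_X6, phi_X7,
    phi_X8, phi_X9, Phi_X0, Phi_X1, Phi_X2, Phi_X3, Phi_X4, Phi_X5, Fin.val_zero, Fin.val_one]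
  ring

lemma key03 (a b c d : ℕ) :
    Phi (phi (nm (a, b, c, d, 0, 3))) = BB (idx (a, b, c, d, 0, 3)) := by
  have h : idx (a, b, c, d, 0, 3) =
      (Finsupp.single 0 (2*a + 1) + Finsupp.single 1 (2*b + 0)
        + Finsupp.single 2 (2*c + 0) + Finsupp.single 3 (2*d + 0),
        ((0 : Fin 2), (1 : Fin 2))) := rfl
  rw [h, BB_apply, mon_map]
  simp [nm, En, Dn, phi_X0, phi_X1, phi_X2, phi_X3, phi_X4, phi_X5, phi_X6, phi_X7,
    phi_X8, phi_X9, Phi_X0, Phi_X1, Phi_X2, Phi_X3, Phi_X4, Phi_X5, Fin.val_zero, Fin.val_one]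
  ring

lemma key10 (a b c d : ℕ) :
    Phi (phi (nm (a, b, c, d, 1, 0))) = BB (idx (a, b, c, d, 1, 0)) := by
  have h : idx (a, b, c, d, 1, 0) =
      (Finsupp.single 0 (2*a + 0) + Finsupp.single 1 (2*b + 1)
        + Finsupp.single 2 (2*c + 1) + Finsupp.single 3 (2*d + 0),
        ((0 : Fin 2), (0 : Fin 2))) := rfl
  rw [h, BB_apply, mon_map]
  simp [nm, En, Dn, phi_X0, phi_X1, phi_X2, phi_X3, phi_X4, phi_X5, phi_X6, phi_X7,
    phi_X8, phi_X9, Phi_X0, Phi_X1, Phi_X2, Phi_X3, Phi_X4, Phi_X5, Fin.val_zero, Fin.val_one]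
  ring

lemma key11 (a b c d : ℕ) :
    Phi (phi (nm (a, b, c, d, 1, 1))) = BB (idx (a, b, c, d, 1, 1)) := by
  have h : idx (a, b, c, d, 1, 1) =
      (Finsupp.single 0 (2*a + 0) + Finsupp.single 1 (2*b + 1)
        + Finsupp.single 2 (2*c + 1) + Finsupp.single 3 (2*d + 0),
        ((1 : Fin 2), (1 : Fin 2))) := rfl
  rw [h, BB_apply, mon_map]
  simp [nm, En, Dn, phi_X0, phi_X1, phi_X2, phi_X3, phi_X4, phi_X5, phi_X6, phi_X7,
    phi_X8, phi_X9, Phi_X0, Phi_X1, Phi_X2, Phi_X3, Phi_X4, Phi_X5, Fin.val_zero, Fin.val_one]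
  ring

lemma key12 (a b c d : ℕ) :
    Phi (phi (nm (a, b, c, d, 1, 2))) = BB (idx (a, b, c, d, 1, 2)) := by
  have h : idx (a, b, c, d, 1, 2) =
      (Finsupp.single 0 (2*a + 1) + Finsupp.single 1 (2*b + 1)
        + Finsupp.single 2 (2*c + 1) + Finsupp.single 3 (2*d + 0),
        ((1 : Fin 2), (0 : Fin 2))) := rfl
  rw [h, BB_apply, mon_map]
  simp [nm, En, Dn, phi_X0, phi_X1, phi_X2, phi_X3, phi_X4, phi_X5, phi_X6, phi_X7,
    phi_X8, phi_X9, Phi_X0, Phi_X1, Phi_X2, Phi_X3, Phi_X4, Phi_X5, Fin.val_zero, Fin.val_one]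
  ring

lemma key13 (a b c d : ℕ) :
    Phi (phi (nm (a, b, c, d, 1, 3))) = BB (idx (a, b, c, d, 1, 3)) := by
  have h : idx (a, b, c, d, 1, 3) =
      (Finsupp.single 0 (2*a + 1) + Finsupp.single 1 (2*b + 1)
        + Finsupp.single 2 (2*c + 1) + Finsupp.single 3 (2*d + 0),
        ((0 : Fin 2), (1 : Fin 2))) := rfl
  rw [h, BB_apply, mon_map]
  simp [nm, En, Dn, phi_X0, phi_X1, phi_X2, phi_X3, phi_X4, phi_X5, phi_X6, phi_X7,
    phi_X8, phi_X9, Phi_X0, Phi_X1, Phi_X2, Phi_X3, Phi_X4, Phi_X5, Fin.val_zero, Fin.val_one]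
  ring

lemma key20 (a b c d : ℕ) :
    Phi (phi (nm (a, b, c, d, 2, 0))) = BB (idx (a, b, c, d, 2, 0)) := by
  have h : idx (a, b, c, d, 2, 0) =
      (Finsupp.single 0 (2*a + 0) + Finsupp.single 1 (2*b + 1)
        + Finsupp.single 2 (2*c + 0) + Finsupp.single 3 (2*d + 1),
        ((0 : Fin 2), (0 : Fin 2))) := rfl
  rw [h, BB_apply, mon_map]
  simp [nm, En, Dn, phi_X0, phi_X1, phi_X2, phi_X3, phi_X4, phi_X5, phi_X6, phi_X7,
    phi_X8, phi_X9, Phi_X0, Phi_X1, Phi_X2, Phi_X3, Phi_X4, Phi_X5, Fin.val_zero, Fin.val_one]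
  ring

lemma key21 (a b c d : ℕ) :
    Phi (phi (nm (a, b, c, d, 2, 1))) = BB (idx (a, b, c, d, 2, 1)) := by
  have h : idx (a, b, c, d, 2, 1) =
      (Finsupp.single 0 (2*a + 0) + Finsupp.single 1 (2*b + 1)
        + Finsupp.single 2 (2*c + 0) + Finsupp.single 3 (2*d + 1),
        ((1 : Fin 2), (1 : Fin 2))) := rfl
  rw [h, BB_apply, mon_map]
  simp [nm, En, Dn, phi_X0, phi_X1, phi_X2, phi_X3, phi_X4, phi_X5, phi_X6, phi_X7,
    phi_X8, phi_X9, Phi_X0, Phi_X1, Phi_X2, Phi_X3, Phi_X4, Phi_X5, Fin.val_zero, Fin.val_one]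
  ring

lemma key22 (a b c d : ℕ) :
    Phi (phi (nm (a, b, c, d, 2, 2))) = BB (idx (a, b, c, d, 2, 2)) := by
  have h : idx (a, b, c, d, 2, 2) =
      (Finsupp.single 0 (2*a + 1) + Finsupp.single 1 (2*b + 1)
        + Finsupp.single 2 (2*c + 0) + Finsupp.single 3 (2*d + 1),
        ((1 : Fin 2), (0 : Fin 2))) := rfl
  rw [h, BB_apply, mon_map]
  simp [nm, En, Dn, phi_X0, phi_X1, phi_X2, phi_X3, phi_X4, phi_X5, phi_X6, phi_X7,
    phi_X8, phi_X9, Phi_X0, Phi_X1, Phi_X2, Phi_X3, Phi_X4, Phi_X5, Fin.val_zero, Fin.val_one]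
  ring

lemma key23 (a b c d : ℕ) :
    Phi (phi (nm (a, b, c, d, 2, 3))) = BB (idx (a, b, c, d, 2, 3)) := by
  have h : idx (a, b, c, d, 2, 3) =
      (Finsupp.single 0 (2*a + 1) + Finsupp.single 1 (2*b + 1)
        + Finsupp.single 2 (2*c + 0) + Finsupp.single 3 (2*d + 1),
        ((0 : Fin 2), (1 : Fin 2))) := rfl
  rw [h, BB_apply, mon_map]
  simp [nm, En, Dn, phi_X0, phi_X1, phi_X2, phi_X3, phi_X4, phi_X5, phi_X6, phi_X7,
    phi_X8, phi_X9, Phi_X0, Phi_X1, Phi_X2, Phi_X3, Phi_X4, Phi_X5, Fin.val_zero, Fin.val_one]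
  ring

lemma key30 (a b c d : ℕ) :
    Phi (phi (nm (a, b, c, d, 3, 0))) = BB (idx (a, b, c, d, 3, 0)) := by
  have h : idx (a, b, c, d, 3, 0) =
      (Finsupp.single 0 (2*a + 0) + Finsupp.single 1 (2*b + 0)
        + Finsupp.single 2 (2*c + 1) + Finsupp.single 3 (2*d + 1),
        ((0 : Fin 2), (0 : Fin 2))) := rfl
  rw [h, BB_apply, mon_map]
  simp [nm, En, Dn, phi_X0, phi_X1, phi_X2, phi_X3, phi_X4, phi_X5, phi_X6, phi_X7,
    phi_X8, phi_X9, Phi_X0, Phi_X1, Phi_X2, Phi_X3, Phi_X4, Phi_X5, Fin.val_zero, Fin.val_one]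
  ring

lemma key31 (a b c d : ℕ) :
    Phi (phi (nm (a, b, c, d, 3, 1))) = BB (idx (a, b, c, d, 3, 1)) := by
  have h : idx (a, b, c, d, 3, 1) =
      (Finsupp.single 0 (2*a + 0) + Finsupp.single 1 (2*b + 0)
        + Finsupp.single 2 (2*c + 1) + Finsupp.single 3 (2*d + 1),
        ((1 : Fin 2), (1 : Fin 2))) := rfl
  rw [h, BB_apply, mon_map]
  simp [nm, En, Dn, phi_X0, phi_X1, phi_X2, phi_X3, phi_X4, phi_X5, phi_X6, phi_X7,
    phi_X8, phi_X9, Phi_X0, Phi_X1, Phi_X2, Phi_X3, Phi_X4, Phi_X5, Fin.val_zero, Fin.val_one]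
  ring

lemma key32 (a b c d : ℕ) :
    Phi (phi (nm (a, b, c, d, 3, 2))) = BB (idx (a, b, c, d, 3, 2)) := by
  have h : idx (a, b, c, d, 3, 2) =
      (Finsupp.single 0 (2*a + 1) + Finsupp.single 1 (2*b + 0)
        + Finsupp.single 2 (2*c + 1) + Finsupp.single 3 (2*d + 1),
        ((1 : Fin 2), (0 : Fin 2))) := rfl
  rw [h, BB_apply, mon_map]
  simp [nm, En, Dn, phi_X0, phi_X1, phi_X2, phi_X3, phi_X4, phi_X5, phi_X6, phi_X7,
    phi_X8, phi_X9, Phi_X0, Phi_X1, Phi_X2, Phi_X3, Phi_X4, Phi_X5, Fin.val_zero, Fin.val_one]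
  ring

lemma key33 (a b c d : ℕ) :
    Phi (phi (nm (a, b, c, d, 3, 3))) = BB (idx (a, b, c, d, 3, 3)) := by
  have h : idx (a, b, c, d, 3, 3) =
      (Finsupp.single 0 (2*a + 1) + Finsupp.single 1 (2*b + 0)
        + Finsupp.single 2 (2*c + 1) + Finsupp.single 3 (2*d + 1),
        ((0 : Fin 2), (1 : Fin 2))) := rfl
  rw [h, BB_apply, mon_map]
  simp [nm, En, Dn, phi_X0, phi_X1, phi_X2, phi_X3, phi_X4, phi_X5, phi_X6, phi_X7,
    phi_X8, phi_X9, Phi_X0, Phi_X1, Phi_X2, Phi_X3, Phi_X4, Phi_X5, Fin.val_zero, Fin.val_one]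
  ring

lemma key (p : Idx) : Phi (phi (nm p)) = BB (idx p) := by
  obtain ⟨a, b, c, d, e, f⟩ := p
  fin_cases e <;> fin_cases f
  · exact key00 a b c d
  · exact key01 a b c d
  · exact key02 a b c d
  · exact key03 a b c d
  · exact key10 a b c d
  · exact key11 a b c d
  · exact key12 a b c d
  · exact key13 a b c d
  · exact key20 a b c d
  · exact key21 a b c d
  · exact key22 a b c d
  · exact key23 a b c d
  · exact key30 a b c d
  · exact key31 a b c d
  · exact key32 a b c d
  · exact key33 a b c d

lemma ijf_inj : Function.Injective ijf := by decide

lemma idx_inj : Function.Injective idx := by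
  rintro ⟨a, b, c, d, e, f⟩ ⟨a', b', c', d', e', f'⟩ h
  simp only [idx, Prod.mk.injEq] at h
  obtain ⟨h1, h2⟩ := h
  have hf : f = f' := ijf_inj h2
  subst hf
  have h10 := DFunLike.congr_fun h1 (0 : Fin 4)
  have h11 := DFunLike.congr_fun h1 (1 : Fin 4)
  have h12 := DFunLike.congr_fun h1 (2 : Fin 4)
  have h13 := DFunLike.congr_fun h1 (3 : Fin 4)
  simp [Finsupp.single_apply] at h10 h11 h12 h13
  have ha : a = a' := by omega
  have hee : e = e' ∧ b = b' ∧ c = c' ∧ d = d' := by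
    fin_cases e <;> fin_cases e' <;> simp_all [ue1, ue2, ue3] <;> omega
  obtain ⟨he, hb, hc, hd⟩ := hee
  subst ha; subst he; subst hb; subst hc; subst hd; rfl

lemma indep : LinearIndependent ℂ (fun p : Idx => Phi (phi (nm p))) := by
  have h : (fun p : Idx => Phi (phi (nm p))) = (⇑BB ∘ idx) := funext fun p => key p
  rw [h]
  exact BB.linearIndependent.comp idx idx_inj

lemma V_zero {v : P10} (hv : v ∈ V) (h0 : Phi (phi v) = 0) : v = 0 := by
  rw [V, Finsupp.mem_span_range_iff_exists_finsupp] at hv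
  obtain ⟨cc, hcc⟩ := hv
  have hl : Finsupp.linearCombination ℂ nm cc = v := by
    rw [Finsupp.linearCombination_apply]; exact hcc
  have h2 : Finsupp.linearCombination ℂ (fun p : Idx => Phi (phi (nm p))) cc = 0 := by
    have h3 := Finsupp.apply_linearCombination ℂ ((Phi.comp phi).toLinearMap) nm cc
    rw [hl] at h3
    simpa [h0, Function.comp_def] using h3.symm
  have hc0 : cc = 0 := linearIndependent_iff.mp indep cc h2
  rw [← hl, hc0, map_zero]

lemma Phi_r1 : Phi r1 = 0 := by
  simp only [r1, map_add, map_sub, map_mul, map_pow, map_ofNat,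
    Phi_X0, Phi_X1, Phi_X2, Phi_X3, Phi_X4, Phi_X5]
  rw [a0_sq, a1_sq, aL0, aL1]; ring

lemma Phi_r2 : Phi r2 = 0 := by
  simp only [r2, map_add, map_sub, map_mul, map_pow, map_ofNat,
    Phi_X0, Phi_X1, Phi_X2, Phi_X3, Phi_X4, Phi_X5]
  rw [a0_sq, a1_sq, aL0, aL1]; ring

lemma Phi_I9 {g : P6} (hg : g ∈ I9) : Phi g = 0 := by
  have hle : I9 ≤ RingHom.ker (Phi : P6 →ₐ[ℂ] B2) := by
    rw [I9_eq, Ideal.span_le]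
    intro g hg
    simp only [Set.mem_insert_iff, Set.mem_singleton_iff] at hg
    rcases hg with rfl | rfl
    · exact Phi_r1
    · exact Phi_r2
  exact hle hg

end

end WBS9

/-- The kernel of ω (the homogeneous ideal of the Bayle–Sano Enriques–Fano threefold
W_{BS}⁹ ⊂ ℙ⁹ of genus 9) is generated by its homogeneous elements of degree 2. -/
theorem ideal_of_WBS9_generated_by_quadrics :
    RingHom.ker omega =
      Ideal.span {f : MvPolynomial (Fin 10) ℂ |
        f ∈ RingHom.ker omega ∧ f.IsHomogeneous 2} := by
  apply le_antisymm
  · intro f hf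
    obtain ⟨v, hv, hfv⟩ := WBS9.reduce f
    have hJS : WBS9.J ≤ Ideal.span {f : MvPolynomial (Fin 10) ℂ |
        f ∈ RingHom.ker omega ∧ f.IsHomogeneous 2} :=
      Ideal.span_le.mpr fun q hq =>
        Ideal.subset_span ⟨WBS9.Q_mem_ker q hq, WBS9.Q_homog q hq⟩
    have hJk : WBS9.J ≤ RingHom.ker omega :=
      Ideal.span_le.mpr fun q hq => WBS9.Q_mem_ker q hq
    have h1 : omega f = 0 := by rwa [RingHom.mem_ker] at hf
    have h2 : omega (f - v) = 0 := by
      have := hJk hfv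
      rwa [RingHom.mem_ker] at this
    have hov : omega v = 0 := by
      have hveq : v = f - (f - v) := by ring
      rw [hveq, map_sub, h1, h2, sub_zero]
    have hphy : WBS9.phi v ∈ I9 := by
      rw [WBS9.omega_eq] at hov
      exact (Ideal.Quotient.eq_zero_iff_mem).mp hov
    have hv0 : v = 0 := WBS9.V_zero hv (WBS9.Phi_I9 hphy)
    have hfJ : f ∈ WBS9.J := by
      have : f - v = f := by rw [hv0, sub_zero]
      rwa [this] at hfv
    exact hJS hfJ
  · rw [Ideal.span_le]
    intro g hg
    exact hg.1
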